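/- arXiv:1503.05458 — 4 statements merged into one kernel-verified Lean document; each statement's English description precedes it below -/
import Mathlib

section
/- In the honeypot signaling game, there is no separating perfect Bayesian Nash equilibrium: no strategy profile in which the sender plays distinct pure messages for the two types, together with Bayes-consistent beliefs, can satisfy the sender's best-response condition for both types. -/
/-!
Under a separating sender strategy, Bayes' rule makes each message fully reveal the type, so the
receiver attacks after the normal system's message and withdraws after the honeypot's. The normal
system then gains by sending the honeypot's message instead, contradicting sender optimality.
-/

/-- Perfect Bayesian Nash equilibrium for the binary cheap-talk honeypot signaling game.
`σS n m` is the probability the sender sends message `n` given type `m`,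
`σR y n` the probability the receiver plays action `y` after message `n`,
`μ m n` the receiver's posterior belief of type `m` after message `n`,
`p` the prior over types, `uS uR y m` the payoffs. -/
def IsPBE (p : Fin 2 → ℝ) (uS uR : Fin 2 → Fin 2 → ℝ)
    (σS σR μ : Fin 2 → Fin 2 → ℝ) : Prop :=
  -- strategies and beliefs are probability distributions
  (∀ m, 0 ≤ σS 0 m ∧ 0 ≤ σS 1 m ∧ σS 0 m + σS 1 m = 1) ∧
  (∀ n, 0 ≤ σR 0 n ∧ 0 ≤ σR 1 n ∧ σR 0 n + σR 1 n = 1) ∧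
  (∀ n, 0 ≤ μ 0 n ∧ 0 ≤ μ 1 n ∧ μ 0 n + μ 1 n = 1) ∧
  -- sender optimality: for each type, the mixed strategy does at least as well
  -- as any pure message
  (∀ m n', (∑ n : Fin 2, σS n m * ∑ y : Fin 2, σR y n * uS y m) ≥
      ∑ y : Fin 2, σR y n' * uS y m) ∧
  -- receiver optimality given beliefs, after every message
  (∀ n y', (∑ y : Fin 2, σR y n * ∑ m : Fin 2, μ m n * uR y m) ≥
      ∑ m : Fin 2, μ m n * uR y' m) ∧
  -- Bayes-consistency of beliefs on messages sent with positive probability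
  (∀ m n, (∑ m' : Fin 2, σS n m' * p m') > 0 →
      μ m n = σS n m * p m / ∑ m' : Fin 2, σS n m' * p m')

open Finset Function

theorem eq_single_of_le_sum_mul {ι : Type*} [Fintype ι] [DecidableEq ι] {q v : ι → ℝ} {i : ι}
    (hq : ∀ y, 0 ≤ q y) (hq1 : ∑ y, q y = 1) (hv : ∀ y ≠ i, v y < v i)
    (hle : v i ≤ ∑ y, q y * v y) : q = Pi.single i 1 := by
  have hterm : ∀ y, 0 ≤ q y * (v i - v y) := fun y => by
    rcases eq_or_ne y i with rfl | hy
    · simp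
    · exact mul_nonneg (hq y) (sub_nonneg.2 (hv y hy).le)
  have hgap : ∑ y, q y * (v i - v y) = 0 := by
    refine le_antisymm ?_ (sum_nonneg fun y _ => hterm y)
    calc ∑ y, q y * (v i - v y) = v i - ∑ y, q y * v y := by
          simp only [mul_sub, sum_sub_distrib, ← sum_mul, hq1, one_mul]
      _ ≤ 0 := sub_nonpos.2 hle
  have hzero : ∀ y ≠ i, q y = 0 := fun y hy =>
    have hy0 := (sum_eq_zero_iff_of_nonneg fun y _ => hterm y).1 hgap y (mem_univ y)
    (mul_eq_zero.1 hy0).resolve_right (sub_ne_zero.2 (hv y hy).ne')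
  have hqi : q i = 1 := by
    rwa [sum_eq_single i (fun y _ hy => hzero y hy) (by simp)] at hq1
  funext y
  rcases eq_or_ne y i with rfl | hy
  · simp [hqi]
  · simp [hzero y hy, hy]

section Separating

variable {ι κ : Type*} [Fintype ι] [DecidableEq κ] {σS : κ → ι → ℝ} {μ : ι → κ → ℝ}
  {p : ι → ℝ} {f : ι → κ}

theorem sum_separating_mul (hf : Injective f)
    (hsep : ∀ m n, σS n m = if n = f m then 1 else 0) (m : ι) :
    ∑ m', σS (f m) m' * p m' = p m := by
  classical
  simp [hsep, hf.eq_iff]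

theorem belief_eq_single_of_separating [DecidableEq ι] (hf : Injective f)
    (hsep : ∀ m n, σS n m = if n = f m then 1 else 0)
    (hbayes : ∀ (m : ι) (n : κ), (∑ m', σS n m' * p m') > 0 →
      μ m n = σS n m * p m / ∑ m', σS n m' * p m')
    {m : ι} (hm : 0 < p m) : (fun m' => μ m' (f m)) = Pi.single m 1 := by
  funext m'
  rw [hbayes m' (f m) (by rwa [sum_separating_mul hf hsep]), sum_separating_mul hf hsep, hsep]
  rcases eq_or_ne m' m with rfl | hm'
  · simp [hm.ne']
  · simp [hf.ne hm'.symm, hm']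

end Separating

theorem response_eq_single_of_belief_eq_single {α ι κ : Type*} [Fintype α] [DecidableEq α]
    [Fintype ι] [DecidableEq ι] {σR : α → κ → ℝ} {μ : ι → κ → ℝ} {uR : α → ι → ℝ}
    {n : κ} {m : ι} {y : α} (hσR : ∀ y, 0 ≤ σR y n) (hσR1 : ∑ y, σR y n = 1)
    (hμ : (fun m' => μ m' n) = Pi.single m 1)
    (hopt : ∀ y', ∑ y, σR y n * ∑ m', μ m' n * uR y m' ≥ ∑ m', μ m' n * uR y' m')
    (hy : ∀ y' ≠ y, uR y' m < uR y m) : (fun y' => σR y' n) = Pi.single y 1 := by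
  have hexp : ∀ y', ∑ m', μ m' n * uR y' m' = uR y' m := fun y' => by
    simp [congrFun hμ, Pi.single_apply]
  refine eq_single_of_le_sum_mul hσR hσR1 hy ?_
  simpa only [hexp] using hopt y

theorem no_separating_equilibrium_general
    (p : Fin 2 → ℝ) (uS uR : Fin 2 → Fin 2 → ℝ)
    (hp0 : 0 < p 0) (hp1 : p 0 < 1) (hpsum : p 0 + p 1 = 1)
    (hS0 : uS 0 0 > uS 1 0)
    (hR0 : uR 1 0 > uR 0 0) (hR1 : uR 0 1 > uR 1 1) :
    ¬ ∃ (σS σR μ : Fin 2 → Fin 2 → ℝ) (f : Fin 2 → Fin 2),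
        Function.Injective f ∧
        (∀ m n, σS n m = if n = f m then 1 else 0) ∧
        IsPBE p uS uR σS σR μ := by
  rintro ⟨σS, σR, μ, f, hf, hsep, -, hσR, -, hSopt, hRopt, hbayes⟩
  have hσR_nonneg (n : Fin 2) : ∀ y, 0 ≤ σR y n := Fin.forall_fin_two.2 ⟨(hσR n).1, (hσR n).2.1⟩
  have hσR_sum (n : Fin 2) : ∑ y, σR y n = 1 := by simpa [Fin.sum_univ_two] using (hσR n).2.2
  have hμ0 := belief_eq_single_of_separating hf hsep hbayes hp0
  have hμ1 := belief_eq_single_of_separating hf hsep hbayes (m := 1) (by linarith)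
  have hattack : (fun y => σR y (f 0)) = Pi.single 1 1 :=
    response_eq_single_of_belief_eq_single (hσR_nonneg _) (hσR_sum _) hμ0 (hRopt _)
      (by simpa [Fin.forall_fin_two] using hR0)
  have hwithdraw : (fun y => σR y (f 1)) = Pi.single 0 1 :=
    response_eq_single_of_belief_eq_single (hσR_nonneg _) (hσR_sum _) hμ1 (hRopt _)
      (by simpa [Fin.forall_fin_two] using hR1)
  have hno_gain : uS 0 0 ≤ uS 1 0 := by
    simpa [hsep, congrFun hattack, congrFun hwithdraw] using hSopt 0 (f 1)
  exact hno_gain.not_gt hS0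

/-- No separating PBE exists in the honeypot game. -/
theorem no_separating_equilibrium
    (p : Fin 2 → ℝ) (uS uR : Fin 2 → Fin 2 → ℝ)
    (hp0 : 0 < p 0) (hp1 : p 0 < 1) (hpsum : p 0 + p 1 = 1)
    (hS0 : uS 0 0 > uS 1 0) (hS1 : uS 1 1 > uS 0 1)
    (hR0 : uR 1 0 > uR 0 0) (hR1 : uR 0 1 > uR 1 1) :
    ¬ ∃ (σS σR μ : Fin 2 → Fin 2 → ℝ) (f : Fin 2 → Fin 2),
        Function.Injective f ∧
        (∀ m n, σS n m = if n = f m then 1 else 0) ∧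
        IsPBE p uS uR σS σR μ :=
  no_separating_equilibrium_general p uS uR hp0 hp1 hpsum hS0 hR0 hR1
end

section
/- In the honeypot signaling game in the attack-favorable region (p(0)·CB₀ > p(1)·CB₁ where CB₀ = u^R(1,0) − u^R(0,0) and CB₁ = u^R(0,1) − u^R(1,1)), the strategy profile in which the sender sends message 1 for both types and the receiver attacks after every message, together with beliefs μ_R(1|1) = p(1) and any off-path belief μ_R(1|0) ≤ CB₀/(CB₀+CB₁), constitutes a perfect Bayesian Nash equilibrium. -/
/-- In the attack-favorable region, pooling on message 1 with the receiver always
attacking, belief `μ(1|1) = p(1)` on path and any off-path belief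
`μ(1|0) ≤ CB₀/(CB₀+CB₁)`, is a PBE. -/
theorem pooling_on_one_attack_favorable_is_PBE
    (p : Fin 2 → ℝ) (uS uR : Fin 2 → Fin 2 → ℝ)
    (hp0 : 0 < p 0) (hp1 : p 0 < 1) (hpsum : p 0 + p 1 = 1)
    (hS0 : uS 0 0 > uS 1 0) (hS1 : uS 1 1 > uS 0 1)
    (hCB0 : uR 1 0 - uR 0 0 > 0) (hCB1 : uR 0 1 - uR 1 1 > 0)
    (hAF : p 0 * (uR 1 0 - uR 0 0) > p 1 * (uR 0 1 - uR 1 1))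
    (μ : Fin 2 → Fin 2 → ℝ)
    (hμ11 : μ 1 1 = p 1) (hμ01 : μ 0 1 = p 0)
    (hμ0nonneg : 0 ≤ μ 1 0) (hμ0sum : μ 0 0 + μ 1 0 = 1)
    (hμ00 : μ 1 0 ≤ (uR 1 0 - uR 0 0) / ((uR 1 0 - uR 0 0) + (uR 0 1 - uR 1 1))) :
    IsPBE p uS uR (fun n _ => if n = 1 then 1 else 0) (fun y _ => if y = 1 then 1 else 0) μ := by
  have hCBsum : (0:ℝ) < (uR 1 0 - uR 0 0) + (uR 0 1 - uR 1 1) := by linarith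
  have hμ00' : μ 1 0 * ((uR 1 0 - uR 0 0) + (uR 0 1 - uR 1 1)) ≤ uR 1 0 - uR 0 0 := by
    calc μ 1 0 * ((uR 1 0 - uR 0 0) + (uR 0 1 - uR 1 1))
        ≤ (uR 1 0 - uR 0 0) / ((uR 1 0 - uR 0 0) + (uR 0 1 - uR 1 1)) *
          ((uR 1 0 - uR 0 0) + (uR 0 1 - uR 1 1)) := by
          exact mul_le_mul_of_nonneg_right hμ00 hCBsum.le
      _ = uR 1 0 - uR 0 0 := div_mul_cancel₀ _ hCBsum.ne'
  refine ⟨?_, ?_, ?_, ?_, ?_, ?_⟩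
  · intro m; norm_num
  · intro n; norm_num
  · intro n
    have h00 : 0 ≤ μ 0 0 := by nlinarith [hμ00', hCBsum, hμ0sum]
    have h01 : 0 ≤ μ 0 1 := by rw [hμ01]; linarith
    have h11 : 0 ≤ μ 1 1 := by rw [hμ11]; linarith
    have hs1 : μ 0 1 + μ 1 1 = 1 := by rw [hμ01, hμ11]; linarith
    fin_cases n
    · exact ⟨h00, hμ0nonneg, hμ0sum⟩
    · exact ⟨h01, h11, hs1⟩
  · intro m n'
    simp [Fin.sum_univ_two]
  · intro n y'
    fin_cases n <;> fin_cases y' <;> simp [Fin.sum_univ_two, hμ11, hμ01]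
    · nlinarith [hμ00', hμ0sum]
    · nlinarith
  · intro m n hpos
    fin_cases n
    · simp [Fin.sum_univ_two] at hpos
    · fin_cases m <;> simp [Fin.sum_univ_two, hpsum, hμ01, hμ11]
end

section
/- In the honeypot signaling game in the defend-favorable region (p(0)·CB₀ < p(1)·CB₁), the profile in which the sender sends message 0 for both types and the receiver withdraws after every message, with beliefs μ_R(1|0) = p(1) and off-path belief μ_R(1|1) ≥ CB₀/(CB₀+CB₁), is a perfect Bayesian Nash equilibrium. -/
/-- In the defend-favorable region, pooling on message 0 with the receiver always
withdrawing, belief `μ(1|0) = p(1)` on path and any off-path belief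
`μ(1|1) ≥ CB₀/(CB₀+CB₁)`, is a PBE. -/
theorem pooling_on_zero_defend_favorable_is_PBE
    (p : Fin 2 → ℝ) (uS uR : Fin 2 → Fin 2 → ℝ)
    (hp0 : 0 < p 0) (hp1 : p 0 < 1) (hpsum : p 0 + p 1 = 1)
    (hS0 : uS 0 0 > uS 1 0) (hS1 : uS 1 1 > uS 0 1)
    (hCB0 : uR 1 0 - uR 0 0 > 0) (hCB1 : uR 0 1 - uR 1 1 > 0)
    (hDF : p 0 * (uR 1 0 - uR 0 0) < p 1 * (uR 0 1 - uR 1 1))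
    (μ : Fin 2 → Fin 2 → ℝ)
    (hμ10 : μ 1 0 = p 1) (hμ00 : μ 0 0 = p 0)
    (hμ1le : μ 1 1 ≤ 1) (hμ1sum : μ 0 1 + μ 1 1 = 1) (hμ1nonneg : 0 ≤ μ 0 1)
    (hμ11 : μ 1 1 ≥ (uR 1 0 - uR 0 0) / ((uR 1 0 - uR 0 0) + (uR 0 1 - uR 1 1))) :
    IsPBE p uS uR (fun n _ => if n = 0 then 1 else 0) (fun y _ => if y = 0 then 1 else 0) μ := by
  have hden : 0 < (uR 1 0 - uR 0 0) + (uR 0 1 - uR 1 1) := by linarith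
  have hμsum : uR 1 0 - uR 0 0 ≤ μ 1 1 * ((uR 1 0 - uR 0 0) + (uR 0 1 - uR 1 1)) :=
    (div_le_iff₀ hden).mp hμ11
  have two : ∀ k : Fin 2, k = 0 ∨ k = 1 := by decide
  refine ⟨?_, ?_, ?_, ?_, ?_, ?_⟩
  · intro m; norm_num
  · intro n; norm_num
  · intro n
    rcases two n with h | h <;> subst h
    · exact ⟨by rw [hμ00]; linarith, by rw [hμ10]; linarith, by rw [hμ00, hμ10]; linarith⟩
    · exact ⟨hμ1nonneg, le_trans (div_pos hCB0 hden).le hμ11, hμ1sum⟩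
  · intro m n'
    rcases two n' with h | h <;> subst h <;> simp [Fin.sum_univ_two]
  · intro n y'
    rcases two n with h | h <;> subst h <;> rcases two y' with h | h <;> subst h <;>
      simp [Fin.sum_univ_two, hμ00, hμ10]
    · nlinarith
    · nlinarith [hμ1sum]
  · intro m n hpos
    rcases two n with h | h <;> subst h
    · rcases two m with h | h <;> subst h <;> simp [Fin.sum_univ_two, hpsum, hμ00, hμ10]
    · simp [Fin.sum_univ_two] at hpos
end

section
/- In the complete-information (omnipotent-detector) outcome with the paper's parameters, the attacker's expected utility 15·p(0) is at least his no-detection pooling-equilibrium utility max(0, 37·p(0) − 22) for every p(0) ∈ [0,1], with strict inequality for all p(0) ∈ (0,1): the attacker always weakly benefits, and interiorly strictly benefits, from omnipotent deception detection. -/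
/-- With the paper's parameters, the attacker's omnipotent-detection utility
`15·p0` weakly dominates his no-detection pooling-equilibrium utility
`max(0, 37·p0 − 22)` on `[0,1]`, strictly on `(0,1)`: the attacker always weakly,
and interiorly strictly, benefits from omnipotent deception detection. -/
theorem attacker_benefits_from_detection :
    (∀ p0 : ℝ, 0 ≤ p0 → p0 ≤ 1 → max 0 (37 * p0 - 22) ≤ 15 * p0) ∧
    (∀ p0 : ℝ, 0 < p0 → p0 < 1 → max 0 (37 * p0 - 22) < 15 * p0) := by
  constructor
  · intro p0 h0 h1
    apply max_le <;> nlinarith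
  · intro p0 h0 h1
    apply max_lt <;> nlinarith
end
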